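/- There is a short exact sequence of compact abelian groups 0 → T(a) → T(t,x) → 𝕋² → 0, where the surjection is induced by the projection 𝕋² × T → 𝕋². Here T(a) = ⟨exp_T(x₁), exp_T(x₂)⟩ is the closed subgroup of T generated by exp_T(x₁) and exp_T(x₂). -/

import Mathlib

noncomputable section

/-- The circle `𝕋 = ℝ/ℤ`. -/
abbrev 𝕊 : Type := UnitAddCircle

/-- The compact torus of rank `n`. -/
abbrev Tor (n : ℕ) : Type := Fin n → 𝕊

/-- The exponential map `𝔱 = ℝⁿ → T = (ℝ/ℤ)ⁿ`. -/
def expT {n : ℕ} (x : Fin n → ℝ) : Tor n := fun i => (x i : 𝕊)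

/-- The two-parameter homomorphism `(r₁,r₂) ↦ (exp(r₁), exp(r₂), exp_T(x₁r₁ + x₂r₂))`
into `𝕋² × T`. -/
def onePar {n : ℕ} (x₁ x₂ : Fin n → ℝ) (r₁ r₂ : ℝ) : (𝕊 × 𝕊) × Tor n :=
  (((r₁ : 𝕊), (r₂ : 𝕊)), expT (r₁ • x₁ + r₂ • x₂))

/-- The closed subgroup `T(t,x) ⊆ 𝕋² × T`: the closure of
`{(exp(r₁), exp(r₂), exp_T(x₁r₁ + x₂r₂)) | r₁, r₂ ∈ ℝ}`. -/
def Ttx {n : ℕ} (x₁ x₂ : Fin n → ℝ) : AddSubgroup ((𝕊 × 𝕊) × Tor n) :=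
  (AddSubgroup.closure (Set.range fun p : ℝ × ℝ => onePar x₁ x₂ p.1 p.2)).topologicalClosure

/-- The closed subgroup `T(a) = ⟨exp_T(x₁), exp_T(x₂)⟩ ⊆ T`. -/
def Ta {n : ℕ} (x₁ x₂ : Fin n → ℝ) : AddSubgroup (Tor n) :=
  (AddSubgroup.closure ({expT x₁, expT x₂} : Set (Tor n))).topologicalClosure

/-!
Write `F : ℝ² → 𝕋² × T` for the homomorphism `r ↦ (exp r₁, exp r₂, exp_T (x₁r₁ + x₂r₂))`.
Every `r` is the sum of a point of the unit square `K` and a point of `ℤ²`, and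
`F(m, k) = (0, m • exp_T x₁ + k • exp_T x₂)`, so `range F = F(K) + {0} × ⟨exp_T x₁, exp_T x₂⟩`.
Since `F(K)` is compact, taking closures gives `T(t,x) = range F + {0} × T(a)`. Projecting to
`𝕋²` is then onto, and an element `F r + (0, c)` of the kernel has `r ∈ ℤ²`, hence lies in
`{0} × T(a)`.
-/

open scoped Pointwise

section ClosureOfRange

variable {G : Type*} [AddGroup G] [TopologicalSpace G] [IsTopologicalAddGroup G]

theorem IsCompact.closure_add_eq {K : Set G} (hK : IsCompact K) (S : Set G) :
    closure (K + S) = K + closure S := by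
  refine (closure_minimal (Set.add_subset_add_left subset_closure)
    (isClosed_closure.add_left_of_isCompact hK)).antisymm ?_
  exact (Set.add_subset_add_right subset_closure).trans (vadd_set_closure_subset K S)

theorem AddMonoidHom.topologicalClosure_range_eq_sup {V : Type*} [AddGroup V] [TopologicalSpace V]
    (F : V →+ G) (hF : Continuous F) {L : AddSubgroup V} {K : Set V} (hK : IsCompact K)
    (hKL : K + (L : Set V) = Set.univ) :
    F.range.topologicalClosure = F.range ⊔ (L.map F).topologicalClosure := by
  refine le_antisymm ?_ (sup_le (AddSubgroup.le_topologicalClosure _)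
    (AddSubgroup.topologicalClosure_minimal _ ((AddSubgroup.map_le_range F L).trans
      (AddSubgroup.le_topologicalClosure _)) (AddSubgroup.isClosed_topologicalClosure _)))
  intro z hz
  have hrange : (F.range : Set G) = F '' K + F '' L := by
    rw [AddMonoidHom.coe_range, ← Set.image_univ, ← hKL, Set.image_add]
  rw [← SetLike.mem_coe, AddSubgroup.topologicalClosure_coe, hrange, (hK.image hF).closure_add_eq]
    at hz
  obtain ⟨_, ⟨v, -, rfl⟩, w, hw, rfl⟩ := hz
  exact AddSubgroup.add_mem_sup ⟨v, rfl⟩ hw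

end ClosureOfRange

theorem AddSubgroup.topologicalClosure_map_inr {G H : Type*} [AddGroup G] [AddGroup H]
    [TopologicalSpace G] [TopologicalSpace H] [IsTopologicalAddGroup G] [IsTopologicalAddGroup H]
    [T1Space G] (S : AddSubgroup H) :
    (S.map (AddMonoidHom.inr G H)).topologicalClosure =
      S.topologicalClosure.map (AddMonoidHom.inr G H) := by
  have hinr : Topology.IsClosedEmbedding (AddMonoidHom.inr G H) := by
    have hrange : Set.range (AddMonoidHom.inr G H) = Prod.fst ⁻¹' {0} := by
      ext ⟨g, h⟩
      simp [eq_comm]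
    exact ⟨isEmbedding_prodMkRight 0, hrange ▸ isClosed_singleton.preimage continuous_fst⟩
  apply SetLike.coe_injective
  simp only [AddSubgroup.topologicalClosure_coe, AddSubgroup.coe_map]
  exact hinr.closure_image_eq S

section

variable {n : ℕ}

lemma coe_intCast_eq_zero (m : ℤ) : ((m : ℝ) : 𝕊) = 0 :=
  (AddCircle.coe_eq_zero_iff 1).2 ⟨m, by simp⟩

def oneParHom (x₁ x₂ : Fin n → ℝ) : ℝ × ℝ →+ (𝕊 × 𝕊) × Tor n where
  toFun p := onePar x₁ x₂ p.1 p.2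
  map_zero' := by ext <;> simp [onePar, expT]
  map_add' p q := by ext <;> simp [onePar, expT, add_mul, add_add_add_comm]

def torusCover : ℝ × ℝ →+ 𝕊 × 𝕊 :=
  (QuotientAddGroup.mk' _).prodMap (QuotientAddGroup.mk' _)

theorem fst_comp_oneParHom (x₁ x₂ : Fin n → ℝ) :
    (AddMonoidHom.fst (𝕊 × 𝕊) (Tor n)).comp (oneParHom x₁ x₂) = torusCover :=
  rfl

theorem continuous_oneParHom (x₁ x₂ : Fin n → ℝ) : Continuous (oneParHom x₁ x₂) := by
  have hcoe : Continuous ((↑) : ℝ → 𝕊) := AddCircle.continuous_mk' 1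
  refine .prodMk (.prodMk (hcoe.comp continuous_fst) (hcoe.comp continuous_snd)) ?_
  exact continuous_pi fun i ↦ hcoe.comp (by fun_prop)

theorem surjective_torusCover : Function.Surjective torusCover :=
  Prod.map_surjective.2 ⟨QuotientAddGroup.mk_surjective, QuotientAddGroup.mk_surjective⟩

theorem mem_ker_torusCover {p : ℝ × ℝ} :
    p ∈ torusCover.ker ↔ ∃ m k : ℤ, p = ((m : ℝ), (k : ℝ)) := by
  simp only [AddMonoidHom.mem_ker, torusCover, AddMonoidHom.coe_prodMap, Prod.map, Prod.mk_eq_zero,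
    QuotientAddGroup.mk'_apply]
  change ((p.1 : 𝕊) = 0 ∧ (p.2 : 𝕊) = 0) ↔ _
  simp only [AddCircle.coe_eq_zero_iff, zsmul_eq_mul, mul_one, Prod.ext_iff]
  constructor
  · rintro ⟨⟨m, hm⟩, k, hk⟩
    exact ⟨m, k, hm.symm, hk.symm⟩
  · rintro ⟨m, k, hm, hk⟩
    exact ⟨⟨m, hm.symm⟩, k, hk.symm⟩

theorem unitSquare_add_ker_torusCover :
    Set.Icc (0 : ℝ) 1 ×ˢ Set.Icc (0 : ℝ) 1 + (torusCover.ker : Set (ℝ × ℝ)) = Set.univ := by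
  refine Set.eq_univ_of_forall fun p ↦ ⟨(Int.fract p.1, Int.fract p.2), ?_, (⌊p.1⌋, ⌊p.2⌋), ?_, ?_⟩
  · exact ⟨⟨Int.fract_nonneg _, (Int.fract_lt_one _).le⟩,
      Int.fract_nonneg _, (Int.fract_lt_one _).le⟩
  · exact mem_ker_torusCover.2 ⟨_, _, rfl⟩
  · simp [Int.fract_add_floor]

theorem oneParHom_intCast (x₁ x₂ : Fin n → ℝ) (m k : ℤ) :
    oneParHom x₁ x₂ ((m : ℝ), (k : ℝ)) = ((0, 0), m • expT x₁ + k • expT x₂) := by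
  ext <;> simp [oneParHom, onePar, expT, coe_intCast_eq_zero]

theorem map_oneParHom_ker_torusCover (x₁ x₂ : Fin n → ℝ) :
    torusCover.ker.map (oneParHom x₁ x₂) =
      (AddSubgroup.closure {expT x₁, expT x₂}).map (AddMonoidHom.inr (𝕊 × 𝕊) (Tor n)) := by
  ext z
  simp only [AddSubgroup.mem_map, mem_ker_torusCover, AddSubgroup.mem_closure_pair]
  constructor
  · rintro ⟨_, ⟨m, k, rfl⟩, rfl⟩
    exact ⟨_, ⟨m, k, rfl⟩, (oneParHom_intCast x₁ x₂ m k).symm⟩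
  · rintro ⟨_, ⟨m, k, rfl⟩, rfl⟩
    exact ⟨_, ⟨m, k, rfl⟩, oneParHom_intCast x₁ x₂ m k⟩

theorem Ttx_eq_sup (x₁ x₂ : Fin n → ℝ) :
    Ttx x₁ x₂ = (oneParHom x₁ x₂).range ⊔ (Ta x₁ x₂).map (AddMonoidHom.inr (𝕊 × 𝕊) (Tor n)) := by
  have hTtx : Ttx x₁ x₂ = (oneParHom x₁ x₂).range.topologicalClosure := by
    rw [Ttx]
    congr 1
    exact AddSubgroup.closure_eq (oneParHom x₁ x₂).range
  rw [hTtx, (oneParHom x₁ x₂).topologicalClosure_range_eq_sup (continuous_oneParHom x₁ x₂)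
    (isCompact_Icc.prod isCompact_Icc) unitSquare_add_ker_torusCover,
    map_oneParHom_ker_torusCover, AddSubgroup.topologicalClosure_map_inr, Ta]

end

theorem stmt_11_general {n : ℕ}
    (x₁ x₂ : Fin n → ℝ) :
    AddSubgroup.map (AddMonoidHom.fst (𝕊 × 𝕊) (Tor n)) (Ttx x₁ x₂) = ⊤ ∧
    Ttx x₁ x₂ ⊓ (AddMonoidHom.fst (𝕊 × 𝕊) (Tor n)).ker
      = AddSubgroup.map (AddMonoidHom.inr (𝕊 × 𝕊) (Tor n)) (Ta x₁ x₂) := by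
  rw [Ttx_eq_sup]
  constructor
  · rw [eq_top_iff, ← AddMonoidHom.range_eq_top.2 surjective_torusCover, ← fst_comp_oneParHom,
      ← AddMonoidHom.map_range]
    exact AddSubgroup.map_mono le_sup_left
  · refine le_antisymm ?_ (le_inf le_sup_right ?_)
    · intro z hz
      obtain ⟨hz, hfst⟩ := AddSubgroup.mem_inf.1 hz
      obtain ⟨_, ⟨p, rfl⟩, w, ⟨c, hc, rfl⟩, rfl⟩ := AddSubgroup.mem_sup.1 hz
      have hp : p ∈ torusCover.ker := by
        rw [AddMonoidHom.mem_ker, map_add] at hfst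
        change torusCover p + 0 = 0 at hfst
        rwa [add_zero] at hfst
      refine add_mem ?_ ⟨c, hc, rfl⟩
      have hFp := AddSubgroup.mem_map_of_mem (oneParHom x₁ x₂) hp
      rw [map_oneParHom_ker_torusCover] at hFp
      exact AddSubgroup.map_mono (AddSubgroup.le_topologicalClosure _) hFp
    · rintro _ ⟨c, -, rfl⟩
      rfl

/-- There is a short exact sequence of compact abelian groups
`0 → T(a) → T(t,x) → 𝕋² → 0`, the surjection being induced by the projection
`𝕋² × T → 𝕋²` and `T(a) = ⟨exp_T(x₁), exp_T(x₂)⟩` sitting inside `T(t,x)` via `{0} × T`. -/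
theorem stmt_11 {n : ℕ} (t₁ t₂ : ℂ) (ht₂ : t₂ ≠ 0) (him : 0 < (t₁ / t₂).im)
    (x₁ x₂ : Fin n → ℝ) :
    AddSubgroup.map (AddMonoidHom.fst (𝕊 × 𝕊) (Tor n)) (Ttx x₁ x₂) = ⊤ ∧
    Ttx x₁ x₂ ⊓ (AddMonoidHom.fst (𝕊 × 𝕊) (Tor n)).ker
      = AddSubgroup.map (AddMonoidHom.inr (𝕊 × 𝕊) (Tor n)) (Ta x₁ x₂) :=
  stmt_11_general x₁ x₂
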